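/- Assume (Hg) and the cut-off setup with K_ip = (‖g(Φ₀)‖_{L²} + 2K_g)‖ψ_tw‖_{L²}. Let Φ₀ : ℝ → ℝⁿ be bounded and C¹ with ∂ξΦ₀ ∈ L² and g(Φ₀) ∈ L², and let ψ_tw ∈ H¹ satisfy ⟨∂ξΦ₀, ψ_tw⟩_{L²} = 1. Suppose Φ − Φ₀ ∈ H¹ with ‖Φ − Φ₀‖_{H¹} ≤ min{1, (4‖ψ_tw‖_{L²})^{-1}}. Then for every v ∈ H¹ with ‖v‖_{L²} ≤ min{1, (4‖ψ_tw‖_{H¹})^{-1}} one has ⟨∂ξ(Φ+v), ψ_tw⟩_{L²} ≥ 1/2 and |⟨g(Φ+v), ψ_tw⟩_{L²}| ≤ K_ip, and consequently the cut-offs are inactive: b(Φ+v, ψ_tw) = −(⟨∂ξ(Φ+v), ψ_tw⟩_{L²})^{-1} ⟨g(Φ+v), ψ_tw⟩_{L²}. -/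

import Mathlib

open MeasureTheory

noncomputable section

abbrev En (n : ℕ) : Type := EuclideanSpace ℝ (Fin n)

/-- membership in `L²(ℝ;ℝⁿ)` -/
def memL2 {n : ℕ} (f : ℝ → En n) : Prop := MemLp f 2 volume

/-- the `L²` norm -/
def l2norm {n : ℕ} (f : ℝ → En n) : ℝ := (eLpNorm f 2 volume).toReal

/-- the `L²` inner product -/
def l2inner {n : ℕ} (f g : ℝ → En n) : ℝ := ∫ ξ, (inner ℝ (f ξ) (g ξ) : ℝ)

/-- `f` is locally absolutely continuous with derivative `f'` -/
def hasWeakDeriv {n : ℕ} (f f' : ℝ → En n) : Prop :=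
  LocallyIntegrable f' volume ∧ ∀ x y : ℝ, f y - f x = ∫ t in x..y, f' t

/-- membership in `H¹`, with the derivative recorded explicitly -/
def memH1 {n : ℕ} (f f' : ℝ → En n) : Prop :=
  hasWeakDeriv f f' ∧ memL2 f ∧ memL2 f'

/-- the `H¹` norm -/
def h1norm {n : ℕ} (f f' : ℝ → En n) : ℝ :=
  Real.sqrt ((l2norm f)^2 + (l2norm f')^2)

/-- membership in `H²`, with both derivatives recorded explicitly -/
def memH2 {n : ℕ} (f f' f'' : ℝ → En n) : Prop :=
  memH1 f f' ∧ memH1 f' f''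

/-- the `H²` norm -/
def h2norm {n : ℕ} (f f' f'' : ℝ → En n) : ℝ :=
  Real.sqrt ((l2norm f)^2 + (l2norm f')^2 + (l2norm f'')^2)

/-- the function `b(u,ψ)` built from the cut-offs; `u` is the profile and `du` its derivative -/
def bfun {n : ℕ} (χlow χhigh : ℝ → ℝ) (g : En n → En n)
    (u du : ℝ → En n) (ψ : ℝ → En n) : ℝ :=
  -(χlow (l2inner du ψ))⁻¹ * χhigh (l2inner (fun ξ => g (u ξ)) ψ)

/-- the function `κ_σ = 1 + σ²b²/(2ρ)` -/
def kappa (ρ σ b : ℝ) : ℝ := 1 + σ^2 * b^2 / (2*ρ)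

namespace Stmt6

variable {n : ℕ}

lemma integrable_inner2 {f h : ℝ → En n} (hf : memL2 f) (hh : memL2 h) :
    Integrable (fun ξ => (inner ℝ (f ξ) (h ξ) : ℝ)) volume := by
  have H := L2.integrable_inner (𝕜 := ℝ) (hf.toLp f) (hh.toLp h)
  refine H.congr ?_
  filter_upwards [hf.coeFn_toLp, hh.coeFn_toLp] with x hx hy
  rw [hx, hy]

lemma l2inner_eq_toLp {f h : ℝ → En n} (hf : memL2 f) (hh : memL2 h) :
    l2inner f h = (inner ℝ (hf.toLp f) (hh.toLp h) : ℝ) := by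
  rw [L2.inner_def]
  refine integral_congr_ae ?_
  filter_upwards [hf.coeFn_toLp, hh.coeFn_toLp] with x hx hy
  rw [hx, hy]

lemma abs_l2inner_le {f h : ℝ → En n} (hf : memL2 f) (hh : memL2 h) :
    |l2inner f h| ≤ l2norm f * l2norm h := by
  rw [l2inner_eq_toLp hf hh]
  have := norm_inner_le_norm (𝕜 := ℝ) (hf.toLp f) (hh.toLp h)
  rw [Real.norm_eq_abs] at this
  rw [Lp.norm_toLp f hf, Lp.norm_toLp h hh] at this
  simpa [l2norm] using this

lemma l2norm_nonneg (f : ℝ → En n) : 0 ≤ l2norm f := ENNReal.toReal_nonneg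

lemma l2inner_add_left {f h ψ : ℝ → En n} (hf : memL2 f) (hh : memL2 h) (hψ : memL2 ψ) :
    l2inner (fun ξ => f ξ + h ξ) ψ = l2inner f ψ + l2inner h ψ := by
  unfold l2inner
  rw [← integral_add (integrable_inner2 hf hψ) (integrable_inner2 hh hψ)]
  congr 1; funext ξ; rw [inner_add_left]

lemma l2norm_fst_le_h1norm (f f' : ℝ → En n) : l2norm f ≤ h1norm f f' := by
  rw [h1norm]
  exact le_trans (le_of_eq (Real.sqrt_sq (l2norm_nonneg f)).symm)
    (Real.sqrt_le_sqrt (le_add_of_nonneg_right (sq_nonneg _)))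

lemma l2norm_snd_le_h1norm (f f' : ℝ → En n) : l2norm f' ≤ h1norm f f' := by
  rw [h1norm]
  exact le_trans (le_of_eq (Real.sqrt_sq (l2norm_nonneg f')).symm)
    (Real.sqrt_le_sqrt (le_add_of_nonneg_left (sq_nonneg _)))


lemma integrable_inner_const {f : ℝ → En n} {μ : Measure ℝ} (hf : Integrable f μ) (c : En n) :
    Integrable (fun t => (inner ℝ (f t) c : ℝ)) μ := by
  refine (hf.norm.mul_const ‖c‖).mono'
    (hf.aestronglyMeasurable.inner aestronglyMeasurable_const) ?_
  exact ae_of_all _ fun t => norm_inner_le_norm _ _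

lemma integrable_const_inner {f : ℝ → En n} {μ : Measure ℝ} (hf : Integrable f μ) (c : En n) :
    Integrable (fun t => (inner ℝ c (f t) : ℝ)) μ := by
  refine (integrable_inner_const hf c).congr (ae_of_all _ fun t => real_inner_comm _ _)

lemma inner_setIntegral {f : ℝ → En n} {s : Set ℝ} (hf : IntegrableOn f s volume) (c : En n) :
    (inner ℝ (∫ t in s, f t) c : ℝ) = ∫ t in s, (inner ℝ (f t) c : ℝ) := by
  rw [real_inner_comm, ← integral_inner hf]
  exact integral_congr_ae (ae_of_all _ fun t => real_inner_comm _ _)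

lemma triangle_swap {v' ψ' : ℝ → En n} {x y : ℝ}
    (hv'int : IntegrableOn v' (Set.Ioc x y) volume)
    (hψ'int : IntegrableOn ψ' (Set.Ioc x y) volume) :
    ∫ t in Set.Ioc x y, ∫ s in Set.Ioc t y, (inner ℝ (v' t) (ψ' s) : ℝ)
      = ∫ t in Set.Ioc x y, ∫ s in Set.Ioc x t, (inner ℝ (v' s) (ψ' t) : ℝ) := by
  set μ := volume.restrict (Set.Ioc x y) with hμ
  set φ : ℝ → ℝ → ℝ := fun t s => if t < s then (inner ℝ (v' t) (ψ' s) : ℝ) else 0 with hφ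
  have huncurry : Function.uncurry φ = ({z : ℝ × ℝ | z.1 < z.2}).indicator
      (fun z => (inner ℝ (v' z.1) (ψ' z.2) : ℝ)) := by
    ext z
    by_cases h : z.1 < z.2 <;>
      simp [Function.uncurry, hφ, h, Set.indicator_apply, Set.mem_setOf_eq]
  have hmeas : AEStronglyMeasurable (Function.uncurry φ) (μ.prod μ) := by
    rw [huncurry]
    exact ((hv'int.aestronglyMeasurable.comp_fst).inner (hψ'int.aestronglyMeasurable.comp_snd)).indicator
      (measurableSet_lt measurable_fst measurable_snd)
  have hint : Integrable (Function.uncurry φ) (μ.prod μ) := by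
    refine (Integrable.mul_prod (L := ℝ) hv'int.norm hψ'int.norm).mono' hmeas ?_
    refine ae_of_all _ fun z => ?_
    by_cases h : z.1 < z.2
    · simp only [Function.uncurry, hφ, if_pos h]
      exact norm_inner_le_norm _ _
    · simp only [Function.uncurry, hφ, if_neg h, norm_zero]
      positivity
  have swap := MeasureTheory.integral_integral_swap hint
  have lhs_eq : ∫ t in Set.Ioc x y, ∫ s in Set.Ioc t y, (inner ℝ (v' t) (ψ' s) : ℝ)
      = ∫ t, (∫ s, φ t s ∂μ) ∂μ := by
    refine setIntegral_congr_fun measurableSet_Ioc fun t ht => ?_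
    have h1 : φ t = (Set.Ioi t).indicator (fun s => (inner ℝ (v' t) (ψ' s) : ℝ)) := by
      ext s; by_cases h : t < s <;> simp [hφ, h, Set.indicator_apply]
    rw [hμ, h1, setIntegral_indicator measurableSet_Ioi]
    congr 1
    rw [Set.Ioc_inter_Ioi, sup_eq_right.mpr ht.1.le]
  have rhs_eq : ∫ t in Set.Ioc x y, ∫ s in Set.Ioc x t, (inner ℝ (v' s) (ψ' t) : ℝ)
      = ∫ s, (∫ t, φ t s ∂μ) ∂μ := by
    refine setIntegral_congr_fun measurableSet_Ioc fun s hs => ?_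
    have h1 : (fun t => φ t s) = (Set.Iio s).indicator (fun t => (inner ℝ (v' t) (ψ' s) : ℝ)) := by
      ext t; by_cases h : t < s <;> simp [hφ, h, Set.indicator_apply]
    rw [hμ, h1, setIntegral_indicator measurableSet_Iio]
    have h2 : Set.Ioc x y ∩ Set.Iio s = Set.Ioo x s := by
      ext z
      simp only [Set.mem_inter_iff, Set.mem_Ioc, Set.mem_Iio, Set.mem_Ioo]
      exact ⟨fun h => ⟨h.1.1, h.2⟩, fun h => ⟨⟨h.1, le_trans h.2.le hs.2⟩, h.2⟩⟩
    rw [h2, ← integral_Ioc_eq_integral_Ioo]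
  rw [lhs_eq, rhs_eq]
  exact swap


lemma prod_rule {v v' ψ ψ' : ℝ → En n}
    (hv : memH1 v v') (hψ : memH1 ψ ψ') {x y : ℝ} (hxy : x ≤ y) :
    (inner ℝ (v y) (ψ y) : ℝ) - (inner ℝ (v x) (ψ x) : ℝ) =
      ∫ t in Set.Ioc x y, ((inner ℝ (v' t) (ψ t) : ℝ) + (inner ℝ (v t) (ψ' t) : ℝ)) := by
  obtain ⟨⟨hv'loc, hvftc⟩, hvL2, hv'L2⟩ := hv
  obtain ⟨⟨hψ'loc, hψftc⟩, hψL2, hψ'L2⟩ := hψ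
  have hv'int : IntegrableOn v' (Set.Ioc x y) volume :=
    (hv'loc.integrableOn_isCompact isCompact_Icc).mono_set Set.Ioc_subset_Icc_self
  have hψ'int : ∀ a b : ℝ, IntegrableOn ψ' (Set.Ioc a b) volume := fun a b =>
    (hψ'loc.integrableOn_isCompact isCompact_Icc).mono_set Set.Ioc_subset_Icc_self
  have hv'int' : ∀ a b : ℝ, IntegrableOn v' (Set.Ioc a b) volume := fun a b =>
    (hv'loc.integrableOn_isCompact isCompact_Icc).mono_set Set.Ioc_subset_Icc_self
  have hA : Integrable (fun t => (inner ℝ (v' t) (ψ t) : ℝ)) volume :=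
    integrable_inner2 hv'L2 hψL2
  have hB : Integrable (fun t => (inner ℝ (v t) (ψ' t) : ℝ)) volume :=
    integrable_inner2 hvL2 hψ'L2
  have ψrep : ∀ t : ℝ, ψ t = ψ y - ∫ s in t..y, ψ' s := by
    intro t; rw [← hψftc t y]; abel
  have vrep : ∀ t : ℝ, v t = v x + ∫ s in x..t, v' s := by
    intro t; rw [← hvftc x t]; abel
  have f1int : Integrable (fun t => (inner ℝ (v' t) (ψ y) : ℝ))
      (volume.restrict (Set.Ioc x y)) := integrable_inner_const hv'int (ψ y)
  have g1int : Integrable (fun t => (inner ℝ (v x) (ψ' t) : ℝ))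
      (volume.restrict (Set.Ioc x y)) := integrable_const_inner (hψ'int x y) (v x)
  -- inner double-integral identities
  have f2eq : ∀ t ∈ Set.Ioc x y, (inner ℝ (v' t) ((∫ s in t..y, ψ' s)) : ℝ)
      = ∫ s in Set.Ioc t y, (inner ℝ (v' t) (ψ' s) : ℝ) := by
    intro t ht
    rw [intervalIntegral.integral_of_le ht.2]
    exact (integral_inner (hψ'int t y) (v' t)).symm
  have g2eq : ∀ t ∈ Set.Ioc x y, (inner ℝ ((∫ s in x..t, v' s)) (ψ' t) : ℝ)
      = ∫ s in Set.Ioc x t, (inner ℝ (v' s) (ψ' t) : ℝ) := by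
    intro t ht
    rw [intervalIntegral.integral_of_le ht.1.le]
    exact inner_setIntegral (hv'int' x t) (ψ' t)
  have splitA : ∀ t ∈ Set.Ioc x y, (inner ℝ (v' t) (ψ t) : ℝ)
      = (inner ℝ (v' t) (ψ y) : ℝ) - ∫ s in Set.Ioc t y, (inner ℝ (v' t) (ψ' s) : ℝ) := by
    intro t ht
    conv_lhs => rw [ψrep t]
    rw [inner_sub_right, f2eq t ht]
  have splitB : ∀ t ∈ Set.Ioc x y, (inner ℝ (v t) (ψ' t) : ℝ)
      = (inner ℝ (v x) (ψ' t) : ℝ) + ∫ s in Set.Ioc x t, (inner ℝ (v' s) (ψ' t) : ℝ) := by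
    intro t ht
    conv_lhs => rw [vrep t]
    rw [inner_add_left, g2eq t ht]
  have f2int : Integrable (fun t => ∫ s in Set.Ioc t y, (inner ℝ (v' t) (ψ' s) : ℝ))
      (volume.restrict (Set.Ioc x y)) := by
    refine (f1int.sub hA.integrableOn).congr ?_
    refine (ae_restrict_iff' measurableSet_Ioc).mpr (ae_of_all _ fun t ht => ?_)
    simp only [Pi.sub_apply]
    have := splitA t ht; linarith
  have g2int : Integrable (fun t => ∫ s in Set.Ioc x t, (inner ℝ (v' s) (ψ' t) : ℝ))
      (volume.restrict (Set.Ioc x y)) := by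
    refine (hB.integrableOn.sub g1int).congr ?_
    refine (ae_restrict_iff' measurableSet_Ioc).mpr (ae_of_all _ fun t ht => ?_)
    simp only [Pi.sub_apply]
    have := splitB t ht; linarith
  have keyA : ∫ t in Set.Ioc x y, (inner ℝ (v' t) (ψ t) : ℝ)
      = (inner ℝ (v y - v x) (ψ y) : ℝ)
        - ∫ t in Set.Ioc x y, ∫ s in Set.Ioc t y, (inner ℝ (v' t) (ψ' s) : ℝ) := by
    rw [setIntegral_congr_fun measurableSet_Ioc splitA, integral_sub f1int f2int]
    congr 1
    rw [← inner_setIntegral hv'int (ψ y)]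
    congr 1
    rw [hvftc x y, intervalIntegral.integral_of_le hxy]
  have keyB : ∫ t in Set.Ioc x y, (inner ℝ (v t) (ψ' t) : ℝ)
      = (inner ℝ (v x) (ψ y - ψ x) : ℝ)
        + ∫ t in Set.Ioc x y, ∫ s in Set.Ioc x t, (inner ℝ (v' s) (ψ' t) : ℝ) := by
    rw [setIntegral_congr_fun measurableSet_Ioc splitB, integral_add g1int g2int]
    congr 1
    rw [integral_inner (hψ'int x y) (v x)]
    congr 1
    rw [hψftc x y, intervalIntegral.integral_of_le hxy]
  rw [integral_add hA.integrableOn hB.integrableOn, keyA, keyB,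
    triangle_swap hv'int (hψ'int x y)]
  rw [inner_sub_left, inner_sub_right]
  ring

open Filter in
lemma limit_zero_atTop {F : ℝ → ℝ} (hF : Integrable F volume) {L : ℝ}
    (hL : Tendsto F atTop (nhds L)) : L = 0 := by
  by_contra hne
  have habs : 0 < |L| / 2 := by positivity
  have h2 : ∀ᶠ y in atTop, |L| / 2 ≤ ‖F y‖ := by
    filter_upwards [Metric.tendsto_nhds.mp hL (|L|/2) habs] with y hy
    rw [Real.dist_eq] at hy
    rw [Real.norm_eq_abs]
    have h3 := abs_sub_abs_le_abs_sub L (F y)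
    rw [abs_sub_comm] at h3
    linarith
  obtain ⟨M, hM⟩ := eventually_atTop.mp h2
  have hconst : Integrable (fun _ : ℝ => |L|/2) (volume.restrict (Set.Ici M)) := by
    refine Integrable.mono hF.integrableOn aestronglyMeasurable_const ?_
    refine (ae_restrict_iff' measurableSet_Ici).mpr (ae_of_all _ fun y hy => ?_)
    rw [Real.norm_eq_abs (|L|/2), abs_of_nonneg (by positivity)]
    exact hM y hy
  rw [integrable_const_iff] at hconst
  rcases hconst with h' | h'
  · exact habs.ne' h'
  · replace h' := h'.measure_univ_lt_top
    rw [Measure.restrict_apply_univ, Real.volume_Ici] at h'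
    exact (lt_irrefl _ h').elim

open Filter in
lemma limit_zero_atBot {F : ℝ → ℝ} (hF : Integrable F volume) {L : ℝ}
    (hL : Tendsto F atBot (nhds L)) : L = 0 := by
  by_contra hne
  have habs : 0 < |L| / 2 := by positivity
  have h2 : ∀ᶠ y in atBot, |L| / 2 ≤ ‖F y‖ := by
    filter_upwards [Metric.tendsto_nhds.mp hL (|L|/2) habs] with y hy
    rw [Real.dist_eq] at hy
    rw [Real.norm_eq_abs]
    have h3 := abs_sub_abs_le_abs_sub L (F y)
    rw [abs_sub_comm] at h3
    linarith
  obtain ⟨M, hM⟩ := eventually_atBot.mp h2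
  have hconst : Integrable (fun _ : ℝ => |L|/2) (volume.restrict (Set.Iic M)) := by
    refine Integrable.mono hF.integrableOn aestronglyMeasurable_const ?_
    refine (ae_restrict_iff' measurableSet_Iic).mpr (ae_of_all _ fun y hy => ?_)
    rw [Real.norm_eq_abs (|L|/2), abs_of_nonneg (by positivity)]
    exact hM y hy
  rw [integrable_const_iff] at hconst
  rcases hconst with h' | h'
  · exact habs.ne' h'
  · replace h' := h'.measure_univ_lt_top
    rw [Measure.restrict_apply_univ, Real.volume_Iic] at h'
    exact (lt_irrefl _ h').elim

open Filter in
lemma ibp {v v' ψ ψ' : ℝ → En n} (hv : memH1 v v') (hψ : memH1 ψ ψ') :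
    l2inner v' ψ = - l2inner v ψ' := by
  have hvL2 := hv.2.1; have hv'L2 := hv.2.2
  have hψL2 := hψ.2.1; have hψ'L2 := hψ.2.2
  set h : ℝ → ℝ := fun t => (inner ℝ (v' t) (ψ t) : ℝ) + (inner ℝ (v t) (ψ' t) : ℝ) with hh
  have hInt : Integrable h volume :=
    (integrable_inner2 hv'L2 hψL2).add (integrable_inner2 hvL2 hψ'L2)
  have hFInt : Integrable (fun t => (inner ℝ (v t) (ψ t) : ℝ)) volume :=
    integrable_inner2 hvL2 hψL2
  have t1 : Tendsto (fun y => ∫ t in (0:ℝ)..y, h t) atTop (nhds (∫ t in Set.Ioi 0, h t)) :=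
    intervalIntegral_tendsto_integral_Ioi 0 hInt.integrableOn tendsto_id
  have tF : Tendsto (fun y => (inner ℝ (v y) (ψ y) : ℝ)) atTop
      (nhds ((inner ℝ (v 0) (ψ 0) : ℝ) + ∫ t in Set.Ioi 0, h t)) := by
    refine (tendsto_const_nhds.add t1).congr' ?_
    filter_upwards [Ici_mem_atTop (0:ℝ)] with y hy
    have hpr := prod_rule hv hψ (hy : (0:ℝ) ≤ y)
    rw [intervalIntegral.integral_of_le (hy : (0:ℝ) ≤ y)]
    have : ∫ t in Set.Ioc 0 y, h t
        = ∫ t in Set.Ioc 0 y, ((inner ℝ (v' t) (ψ t) : ℝ) + (inner ℝ (v t) (ψ' t) : ℝ)) := rfl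
    rw [this]
    linarith
  have t2 : Tendsto (fun y => ∫ t in y..(0:ℝ), h t) atBot (nhds (∫ t in Set.Iic 0, h t)) :=
    intervalIntegral_tendsto_integral_Iic 0 hInt.integrableOn tendsto_id
  have tF' : Tendsto (fun y => (inner ℝ (v y) (ψ y) : ℝ)) atBot
      (nhds ((inner ℝ (v 0) (ψ 0) : ℝ) - ∫ t in Set.Iic 0, h t)) := by
    refine (tendsto_const_nhds.sub t2).congr' ?_
    filter_upwards [Iic_mem_atBot (0:ℝ)] with y hy
    have hpr := prod_rule hv hψ (hy : y ≤ (0:ℝ))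
    rw [intervalIntegral.integral_of_le (hy : y ≤ (0:ℝ))]
    have : ∫ t in Set.Ioc y 0, h t
        = ∫ t in Set.Ioc y 0, ((inner ℝ (v' t) (ψ t) : ℝ) + (inner ℝ (v t) (ψ' t) : ℝ)) := rfl
    rw [this]
    linarith
  have L1 := limit_zero_atTop hFInt tF
  have L2 := limit_zero_atBot hFInt tF'
  have htotal : ∫ t, h t = 0 := by
    rw [← integral_add_compl measurableSet_Iic hInt, Set.compl_Iic]
    linarith
  have hsplit : ∫ t, h t = l2inner v' ψ + l2inner v ψ' := by
    rw [hh]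
    exact integral_add (integrable_inner2 hv'L2 hψL2) (integrable_inner2 hvL2 hψ'L2)
  rw [hsplit] at htotal
  linarith


lemma l2norm_add_le {f h : ℝ → En n} (hf : memL2 f) (hh : memL2 h) :
    l2norm (fun ξ => f ξ + h ξ) ≤ l2norm f + l2norm h := by
  have h1 : eLpNorm (fun ξ => f ξ + h ξ) 2 volume ≤ eLpNorm f 2 volume + eLpNorm h 2 volume :=
    eLpNorm_add_le hf.1 hh.1 one_le_two
  have h2 := ENNReal.toReal_mono (ENNReal.add_ne_top.mpr ⟨hf.2.ne, hh.2.ne⟩) h1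
  rwa [ENNReal.toReal_add hf.2.ne hh.2.ne] at h2

lemma l2norm_le_mul {f h : ℝ → En n} {K : ℝ} (hK : 0 < K) (hh : memL2 h)
    (hbound : ∀ ξ, ‖f ξ‖ ≤ K * ‖h ξ‖) : l2norm f ≤ K * l2norm h := by
  have h1 : eLpNorm f 2 volume ≤ eLpNorm (fun ξ => K • h ξ) 2 volume := by
    apply eLpNorm_mono
    intro ξ
    rw [norm_smul, Real.norm_eq_abs, abs_of_pos hK]
    exact hbound ξ
  have h2 : eLpNorm (fun ξ => K • h ξ) 2 volume = ‖K‖₊ * eLpNorm h 2 volume :=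
    eLpNorm_const_smul K h 2 volume
  rw [h2] at h1
  have hfin : (‖K‖₊ : ENNReal) * eLpNorm h 2 volume ≠ ⊤ :=
    ENNReal.mul_ne_top ENNReal.coe_ne_top hh.2.ne
  have h3 := ENNReal.toReal_mono hfin h1
  rw [ENNReal.toReal_mul, ENNReal.coe_toReal, coe_nnnorm, Real.norm_eq_abs, abs_of_pos hK] at h3
  exact h3

end Stmt6

open Stmt6 in
/-- for small perturbations the cut-offs in the definition of `b` are
inactive, and `b` is given by the explicit quotient formula. -/
theorem statement6 {n : ℕ} (hn : 1 ≤ n) (g : En n → En n)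
    (hg : ContDiff ℝ 1 g) (Kg : ℝ) (hKg : 0 < Kg)
    (hDg : ∀ u : En n, ‖fderiv ℝ g u‖ ≤ Kg)
    (hDgLip : ∀ uA uB : En n, ‖fderiv ℝ g uA - fderiv ℝ g uB‖ ≤ Kg * ‖uA - uB‖)
    (Φ₀ : ℝ → En n) (hΦ₀C1 : ContDiff ℝ 1 Φ₀)
    (hΦ₀bdd : ∃ B : ℝ, ∀ ξ, ‖Φ₀ ξ‖ ≤ B)
    (hΦ₀' : memL2 (deriv Φ₀))
    (hgΦ₀ : memL2 (fun ξ => g (Φ₀ ξ)))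
    (ψtw ψtw' : ℝ → En n) (hψtw : memH1 ψtw ψtw')
    (hψnorm : l2inner (deriv Φ₀) ψtw = 1)
    (Kip : ℝ) (hKipdef : Kip = (l2norm (fun ξ => g (Φ₀ ξ)) + 2*Kg) * l2norm ψtw)
    (χlow χhigh : ℝ → ℝ)
    (hχlow_smooth : ContDiff ℝ (⊤ : ℕ∞) χlow) (hχlow_mono : Monotone χlow)
    (hχlow_lb : ∀ θ : ℝ, (1/4:ℝ) ≤ χlow θ)
    (hχlow_eq1 : ∀ θ : ℝ, θ ≤ 1/4 → χlow θ = 1/4)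
    (hχlow_eq2 : ∀ θ : ℝ, 1/2 ≤ θ → χlow θ = θ)
    (hχhigh_bd : ∀ θ : ℝ, |χhigh θ| ≤ Kip + 1)
    (hχhigh_smooth : ContDiff ℝ (⊤ : ℕ∞) χhigh) (hχhigh_mono : Monotone χhigh)
    (hχhigh_eq1 : ∀ θ : ℝ, |θ| ≤ Kip → χhigh θ = θ)
    (hχhigh_eq2 : ∀ θ : ℝ, Kip + 1 ≤ |θ| → χhigh θ = Real.sign θ * (Kip + 1))
    (p p' : ℝ → En n) (hp : memH1 p p')
    (hpsmall : h1norm p p' ≤ min 1 (4 * l2norm ψtw)⁻¹) :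
    ∀ v v' : ℝ → En n, memH1 v v' →
      l2norm v ≤ min 1 (4 * h1norm ψtw ψtw')⁻¹ →
      (1/2 : ℝ) ≤ l2inner (fun ξ => deriv Φ₀ ξ + p' ξ + v' ξ) ψtw ∧
      |l2inner (fun ξ => g (Φ₀ ξ + p ξ + v ξ)) ψtw| ≤ Kip ∧
      bfun χlow χhigh g (fun ξ => Φ₀ ξ + p ξ + v ξ)
          (fun ξ => deriv Φ₀ ξ + p' ξ + v' ξ) ψtw =
        -(l2inner (fun ξ => deriv Φ₀ ξ + p' ξ + v' ξ) ψtw)⁻¹ *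
          l2inner (fun ξ => g (Φ₀ ξ + p ξ + v ξ)) ψtw := by
  intro v v' hv hvsmall
  obtain ⟨hψwd, hψL2, hψ'L2⟩ := hψtw
  obtain ⟨hpwd, hpL2, hp'L2⟩ := hp
  obtain ⟨hvwd, hvL2, hv'L2⟩ := hv
  -- positivity of the norms
  have hSpos : 0 < l2norm ψtw := by
    have h := abs_l2inner_le hΦ₀' hψL2
    rw [hψnorm, abs_one] at h
    by_contra hc
    push_neg at hc
    nlinarith [l2norm_nonneg (deriv Φ₀), l2norm_nonneg ψtw]
  have hHpos : 0 < h1norm ψtw ψtw' := lt_of_lt_of_le hSpos (l2norm_fst_le_h1norm _ _)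
  -- claim 1
  have e1 : l2inner (fun ξ => deriv Φ₀ ξ + p' ξ + v' ξ) ψtw
      = l2inner (deriv Φ₀) ψtw + l2inner p' ψtw + l2inner v' ψtw := by
    have a1 : l2inner (fun ξ => deriv Φ₀ ξ + p' ξ + v' ξ) ψtw
        = l2inner (fun ξ => deriv Φ₀ ξ + p' ξ) ψtw + l2inner v' ψtw :=
      l2inner_add_left (f := fun ξ => deriv Φ₀ ξ + p' ξ) (h := v')
        (hΦ₀'.add hp'L2) hv'L2 hψL2
    have a2 : l2inner (fun ξ => deriv Φ₀ ξ + p' ξ) ψtw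
        = l2inner (deriv Φ₀) ψtw + l2inner p' ψtw :=
      l2inner_add_left hΦ₀' hp'L2 hψL2
    rw [a1, a2]
  have b1 : |l2inner p' ψtw| ≤ 1/4 := by
    have hcs := abs_l2inner_le hp'L2 hψL2
    have h5 : l2norm p' ≤ (4 * l2norm ψtw)⁻¹ :=
      le_trans (l2norm_snd_le_h1norm p p') (le_trans hpsmall (min_le_right _ _))
    calc |l2inner p' ψtw| ≤ l2norm p' * l2norm ψtw := hcs
      _ ≤ (4 * l2norm ψtw)⁻¹ * l2norm ψtw :=
        mul_le_mul_of_nonneg_right h5 hSpos.le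
      _ = 1/4 := by field_simp
  have b2 : |l2inner v' ψtw| ≤ 1/4 := by
    rw [ibp ⟨hvwd, hvL2, hv'L2⟩ ⟨hψwd, hψL2, hψ'L2⟩, abs_neg]
    have hcs := abs_l2inner_le hvL2 hψ'L2
    have h6 : l2norm v ≤ (4 * h1norm ψtw ψtw')⁻¹ := hvsmall.trans (min_le_right _ _)
    have h7 : l2norm ψtw' ≤ h1norm ψtw ψtw' := l2norm_snd_le_h1norm _ _
    calc |l2inner v ψtw'| ≤ l2norm v * l2norm ψtw' := hcs
      _ ≤ (4 * h1norm ψtw ψtw')⁻¹ * h1norm ψtw ψtw' :=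
        mul_le_mul h6 h7 (l2norm_nonneg _) (by positivity)
      _ = 1/4 := by field_simp
  have claim1 : (1/2 : ℝ) ≤ l2inner (fun ξ => deriv Φ₀ ξ + p' ξ + v' ξ) ψtw := by
    rw [e1, hψnorm]
    obtain ⟨hb1, _⟩ := abs_le.mp b1
    obtain ⟨hb2, _⟩ := abs_le.mp b2
    linarith
  -- claim 2
  have gLip : ∀ a b : En n, ‖g a - g b‖ ≤ Kg * ‖a - b‖ := fun a b =>
    Convex.norm_image_sub_le_of_norm_fderiv_le
      (fun x _ => (hg.differentiable one_ne_zero).differentiableAt)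
      (fun x _ => hDg x) convex_univ (Set.mem_univ b) (Set.mem_univ a)
  have hd_bound : ∀ ξ, ‖g (Φ₀ ξ + p ξ + v ξ) - g (Φ₀ ξ)‖ ≤ Kg * ‖p ξ + v ξ‖ := by
    intro ξ
    have := gLip (Φ₀ ξ + p ξ + v ξ) (Φ₀ ξ)
    rwa [show Φ₀ ξ + p ξ + v ξ - Φ₀ ξ = p ξ + v ξ from by abel] at this
  have hu_meas : AEStronglyMeasurable (fun ξ => Φ₀ ξ + p ξ + v ξ) volume :=
    ((hΦ₀C1.continuous.aestronglyMeasurable).add hpL2.1).add hvL2.1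
  have hd_meas : AEStronglyMeasurable (fun ξ => g (Φ₀ ξ + p ξ + v ξ) - g (Φ₀ ξ)) volume :=
    (hg.continuous.comp_aestronglyMeasurable hu_meas).sub hgΦ₀.1
  have hpvL2 : memL2 (fun ξ => p ξ + v ξ) := hpL2.add hvL2
  have hdL2 : memL2 (fun ξ => g (Φ₀ ξ + p ξ + v ξ) - g (Φ₀ ξ)) :=
    MemLp.of_le_mul hpvL2 hd_meas (ae_of_all _ fun ξ => hd_bound ξ)
  have e2 : l2inner (fun ξ => g (Φ₀ ξ + p ξ + v ξ)) ψtw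
      = l2inner (fun ξ => g (Φ₀ ξ)) ψtw
        + l2inner (fun ξ => g (Φ₀ ξ + p ξ + v ξ) - g (Φ₀ ξ)) ψtw := by
    have hfe : (fun ξ => g (Φ₀ ξ + p ξ + v ξ))
        = fun ξ => g (Φ₀ ξ) + (g (Φ₀ ξ + p ξ + v ξ) - g (Φ₀ ξ)) := by
      funext ξ; abel
    rw [hfe]
    exact l2inner_add_left hgΦ₀ hdL2 hψL2
  have hp1 : l2norm p ≤ 1 :=
    le_trans (l2norm_fst_le_h1norm p p') (hpsmall.trans (min_le_left _ _))
  have hv1 : l2norm v ≤ 1 := hvsmall.trans (min_le_left _ _)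
  have hdnorm : l2norm (fun ξ => g (Φ₀ ξ + p ξ + v ξ) - g (Φ₀ ξ))
      ≤ Kg * (l2norm p + l2norm v) := by
    refine le_trans (l2norm_le_mul hKg hpvL2 hd_bound) ?_
    have := l2norm_add_le hpL2 hvL2
    nlinarith
  have claim2 : |l2inner (fun ξ => g (Φ₀ ξ + p ξ + v ξ)) ψtw| ≤ Kip := by
    rw [e2, hKipdef]
    have c1 := abs_l2inner_le hgΦ₀ hψL2
    have c2 := abs_l2inner_le hdL2 hψL2
    have hgn := l2norm_nonneg (fun ξ => g (Φ₀ ξ))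
    have habs := abs_add_le (l2inner (fun ξ => g (Φ₀ ξ)) ψtw)
      (l2inner (fun ξ => g (Φ₀ ξ + p ξ + v ξ) - g (Φ₀ ξ)) ψtw)
    have k1 : l2norm (fun ξ => g (Φ₀ ξ + p ξ + v ξ) - g (Φ₀ ξ)) * l2norm ψtw
        ≤ (Kg * (l2norm p + l2norm v)) * l2norm ψtw :=
      mul_le_mul_of_nonneg_right hdnorm hSpos.le
    have k2 : (Kg * (l2norm p + l2norm v)) * l2norm ψtw ≤ (Kg * 2) * l2norm ψtw :=
      mul_le_mul_of_nonneg_right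
        (mul_le_mul_of_nonneg_left (by linarith) hKg.le) hSpos.le
    have expand : ((l2norm fun ξ => g (Φ₀ ξ)) + 2 * Kg) * l2norm ψtw
        = (l2norm fun ξ => g (Φ₀ ξ)) * l2norm ψtw + (Kg * 2) * l2norm ψtw := by ring
    linarith
  refine ⟨claim1, claim2, ?_⟩
  simp only [bfun]
  rw [hχlow_eq2 _ claim1, hχhigh_eq1 _ claim2]
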